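/- arXiv:2004.10837 — 2 statements merged into one kernel-verified Lean document; each statement's English description precedes it below -/
import Mathlib

section
/- For a tuple A = (A₁,…,A_a) of nonnegative integers and an integer t with 0 ≤ t ≤ |A| (where |A| = A₁+⋯+A_a), the quantum multinomial coefficient splits as: [|A| choose A₁,…,A_a] = Σ over tuples (At₁,…,At_a) with 0 ≤ At_i ≤ A_i and At₁+⋯+At_a = t of q^{e(At)} · [t choose At₁,…,At_a] · [|A|-t choose A₁-At₁,…,A_a-At_a], where the exponent e(At) = 2·Σ_{i<j} At_j·(A_i - At_i) is a quadratic form in the summation indices. -/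
open Finset

noncomputable def q : RatFunc ℚ := RatFunc.X

/-- `(q²;q²)_k = ∏_{i=1}^{k} (1 - q^{2i})`. -/
noncomputable def qp (k : ℕ) : RatFunc ℚ := ∏ i ∈ Finset.range k, (1 - q ^ (2 * (i + 1)))

/-- The quantum multinomial coefficient `[|d| choose d₁,…,d_m]`. -/
noncomputable def qmul {m : ℕ} (d : Fin m → ℕ) : RatFunc ℚ :=
  qp (∑ i, d i) / ∏ i, qp (d i)

/-!
The generating polynomial `∏_{j<n} (1 + q^{2(j+1)} z)` has `z^t`-coefficient
`q^{t(t+1)} [n choose t]` (q-binomial theorem). Cutting the product into consecutive blocks of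
lengths `A₁, …, A_a` writes it as a product of generating polynomials of the same kind, with `z`
rescaled by `q^{2(A₁+⋯+A_{i-1})}`. Comparing `z^t`-coefficients gives a q-Vandermonde identity for
Gaussian binomials, in which the powers of `q` add up to `q^{t(t+1) + e(At)}`; multiplying it by
`(q²;q²)_t (q²;q²)_{|A|-t} / ∏ (q²;q²)_{A_i}` gives the multinomial statement.
-/

open Polynomial

lemma sq_sum_eq_sum_sq_add_two_mul_sum_lt {R : Type*} [CommSemiring R] {a : ℕ} (y : Fin a → R) :
    (∑ i, y i) ^ 2 = ∑ i, y i ^ 2 + 2 * ∑ i, (∑ j, if j < i then y j else 0) * y i := by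
  induction a with
  | zero => simp
  | succ a ih =>
    simp only [Fin.sum_univ_succ, Fin.succ_lt_succ_iff, Fin.not_lt_zero, Fin.succ_pos, if_true,
      if_false, sum_const_zero, zero_mul, zero_add, add_mul, sum_add_distrib, ← mul_sum]
    rw [add_sq, ih]
    ring

-- With `x = A - At` and `y = At`, the left side is the total power of `q` in the blockwise
-- coefficients of the generating polynomial.
lemma sum_two_mul_prefix_mul_add_eq {R : Type*} [CommSemiring R] {a : ℕ} (x y : Fin a → R) :
    ∑ i, (2 * (∑ j, if j < i then x j + y j else 0) * y i + y i * (y i + 1)) =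
      (∑ i, y i) * (∑ i, y i + 1) + 2 * ∑ i, ∑ j, if i < j then y j * x i else 0 := by
  have hx : ∑ i, (∑ j, if j < i then x j else 0) * y i =
      ∑ i, ∑ j, if i < j then y j * x i else 0 := by
    simp only [sum_mul, ite_mul, zero_mul]
    rw [sum_comm]
    simp only [mul_comm]
  rw [mul_add_one, ← sq, sq_sum_eq_sum_sq_add_two_mul_sum_lt, ← hx]
  calc _ = ∑ i, (y i ^ 2 + 2 * ((∑ j, if j < i then y j else 0) * y i) + y i
          + 2 * ((∑ j, if j < i then x j else 0) * y i)) :=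
        sum_congr rfl fun i _ => by simp only [ite_add_zero, sum_add_distrib]; ring
    _ = _ := by simp only [sum_add_distrib, mul_sum]

lemma le_of_mem_piFinset_range {ι : Type*} [Fintype ι] [DecidableEq ι] {A At : ι → ℕ}
    (h : At ∈ Fintype.piFinset fun i => range (A i + 1)) (i : ι) : At i ≤ A i :=
  Nat.lt_succ_iff.1 (mem_range.1 (Fintype.mem_piFinset.1 h i))

theorem coeff_prod_of_natDegree_le {ι R : Type*} [Fintype ι] [DecidableEq ι] [CommSemiring R]
    (p : ι → R[X]) (A : ι → ℕ) (hp : ∀ i, (p i).natDegree ≤ A i) (t : ℕ) :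
    (∏ i, p i).coeff t =
      ∑ At ∈ (Fintype.piFinset fun i => range (A i + 1)).filter (fun At => ∑ i, At i = t),
        ∏ i, (p i).coeff (At i) := by
  have hp' : ∀ i, p i = ∑ k ∈ range (A i + 1), C ((p i).coeff k) * X ^ k :=
    fun i => as_sum_range_C_mul_X_pow' (p i) (Nat.lt_succ_of_le (hp i))
  rw [prod_congr rfl fun i _ => hp' i, prod_univ_sum, finsetSum_coeff, sum_filter]
  refine sum_congr rfl fun At _ => ?_
  rw [prod_mul_distrib, ← map_prod, prod_pow_eq_pow_sum, coeff_C_mul_X_pow]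
  simp only [eq_comm]

lemma q_ne_zero : q ≠ 0 := RatFunc.X_ne_zero

lemma one_sub_q_pow_ne_zero {m : ℕ} (hm : m ≠ 0) : 1 - q ^ m ≠ 0 := by
  rw [sub_ne_zero, ne_comm, q, ← RatFunc.algebraMap_X, ← map_pow, ← map_one (algebraMap ℚ[X] _),
    (RatFunc.algebraMap_injective ℚ).ne_iff]
  intro h
  simpa [coeff_one, hm] using congrArg (coeff · m) h

lemma qp_ne_zero (k : ℕ) : qp k ≠ 0 :=
  prod_ne_zero_iff.2 fun _ _ => one_sub_q_pow_ne_zero (by positivity)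

lemma qp_zero : qp 0 = 1 := prod_range_zero _

lemma qp_succ (k : ℕ) : qp (k + 1) = qp k * (1 - q ^ (2 * (k + 1))) :=
  prod_range_succ _ k

-- The Gaussian binomial in base `q²`, set to `0` for `k > n` so that the q-Pascal rule holds
-- for all `n` and `k`.
noncomputable def qbin (n k : ℕ) : RatFunc ℚ :=
  if k ≤ n then qp n / (qp k * qp (n - k)) else 0

lemma qbin_of_le {n k : ℕ} (h : k ≤ n) : qbin n k = qp n / (qp k * qp (n - k)) := if_pos h

lemma qbin_of_lt {n k : ℕ} (h : n < k) : qbin n k = 0 := if_neg h.not_ge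

lemma qbin_zero_right (n : ℕ) : qbin n 0 = 1 := by
  rw [qbin_of_le n.zero_le, qp_zero, one_mul, Nat.sub_zero, div_self (qp_ne_zero n)]

lemma qbin_self (n : ℕ) : qbin n n = 1 := by
  rw [qbin_of_le le_rfl, Nat.sub_self, qp_zero, mul_one, div_self (qp_ne_zero n)]

lemma qbin_zero_succ (k : ℕ) : qbin 0 (k + 1) = 0 := qbin_of_lt k.succ_pos

lemma qbin_succ_succ (n k : ℕ) :
    qbin (n + 1) (k + 1) = q ^ (2 * (k + 1)) * qbin n (k + 1) + qbin n k := by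
  rcases lt_trichotomy k n with hlt | rfl | hgt
  · obtain ⟨m, rfl⟩ := Nat.exists_eq_add_of_lt hlt
    rw [qbin_of_le (by omega), qbin_of_le (by omega), qbin_of_le (by omega),
      show k + m + 1 + 1 - (k + 1) = m + 1 by omega, show k + m + 1 - (k + 1) = m by omega,
      show k + m + 1 - k = m + 1 by omega, qp_succ (k + m + 1), qp_succ k, qp_succ m]
    have := qp_ne_zero k
    have := qp_ne_zero m
    have := one_sub_q_pow_ne_zero (m := 2 * (k + 1)) (by omega)
    have := one_sub_q_pow_ne_zero (m := 2 * (m + 1)) (by omega)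
    field_simp
    ring
  · rw [qbin_self, qbin_self, qbin_of_lt k.lt_succ_self, mul_zero, zero_add]
  · simp [qbin_of_lt, hgt, Nat.lt_succ_of_lt hgt]

/-- `(-u q² z; q²)_n` as a polynomial in `z`. -/
noncomputable def qPochPoly (u : RatFunc ℚ) (n : ℕ) : (RatFunc ℚ)[X] :=
  ∏ j ∈ range n, (1 + C (u * q ^ (2 * (j + 1))) * X)

lemma qPochPoly_succ (u : RatFunc ℚ) (n : ℕ) :
    qPochPoly u (n + 1) = (1 + C (u * q ^ 2) * X) * qPochPoly (u * q ^ 2) n := by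
  rw [qPochPoly, prod_range_succ', mul_comm, qPochPoly]
  congr 1
  refine prod_congr rfl fun j _ => ?_
  ring_nf

lemma qPochPoly_add (u : RatFunc ℚ) (m n : ℕ) :
    qPochPoly u (m + n) = qPochPoly u m * qPochPoly (u * q ^ (2 * m)) n := by
  rw [qPochPoly, prod_range_add, qPochPoly, qPochPoly]
  congr 1
  refine prod_congr rfl fun j _ => ?_
  ring_nf

theorem coeff_qPochPoly (u : RatFunc ℚ) (n k : ℕ) :
    (qPochPoly u n).coeff k = u ^ k * q ^ (k * (k + 1)) * qbin n k := by
  induction n generalizing u k with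
  | zero => cases k <;> simp [qPochPoly, coeff_one, qbin_zero_right, qbin_zero_succ]
  | succ n ih =>
    rw [qPochPoly_succ, add_mul, one_mul, mul_assoc, coeff_add, coeff_C_mul]
    cases k with
    | zero => rw [coeff_X_mul_zero, ih, qbin_zero_right, qbin_zero_right]; ring
    | succ k => rw [coeff_X_mul, ih, ih, qbin_succ_succ]; ring

lemma natDegree_qPochPoly_le (u : RatFunc ℚ) (n : ℕ) : (qPochPoly u n).natDegree ≤ n :=
  natDegree_le_iff_coeff_eq_zero.2 fun _ h => by rw [coeff_qPochPoly, qbin_of_lt h, mul_zero]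

lemma qPochPoly_sum {a : ℕ} (u : RatFunc ℚ) (A : Fin a → ℕ) :
    qPochPoly u (∑ i, A i) =
      ∏ i, qPochPoly (u * q ^ (2 * ∑ j, if j < i then A j else 0)) (A i) := by
  induction a generalizing u with
  | zero => simp [qPochPoly]
  | succ a ih =>
    simp only [Fin.sum_univ_succ, Fin.prod_univ_succ, Fin.succ_lt_succ_iff, Fin.not_lt_zero,
      Fin.succ_pos, if_true, if_false, sum_const_zero]
    simp only [qPochPoly_add, ih, mul_add, pow_add, mul_assoc, mul_zero, pow_zero, mul_one]

theorem qbin_sum_eq_sum_prod_qbin {a : ℕ} (A : Fin a → ℕ) (t : ℕ) :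
    qbin (∑ i, A i) t =
      ∑ At ∈ (Fintype.piFinset fun i => range (A i + 1)).filter (fun At => ∑ i, At i = t),
        q ^ (2 * ∑ i, ∑ j, if i < j then At j * (A i - At i) else 0) * ∏ i, qbin (A i) (At i) := by
  have h := congrArg (coeff · t) (qPochPoly_sum 1 A)
  simp only [coeff_qPochPoly, one_pow, one_mul,
    coeff_prod_of_natDegree_le _ A fun i => natDegree_qPochPoly_le _ _] at h
  refine mul_left_cancel₀ (pow_ne_zero (t * (t + 1)) q_ne_zero) (h.trans ?_)
  rw [mul_sum]
  refine sum_congr rfl fun At hAt => ?_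
  obtain ⟨hmem, rfl⟩ := mem_filter.1 hAt
  obtain ⟨x, rfl⟩ : ∃ x : Fin a → ℕ, A = fun i => x i + At i :=
    ⟨fun i => A i - At i,
      funext fun i => (Nat.sub_add_cancel (le_of_mem_piFinset_range hmem i)).symm⟩
  simp only [Nat.add_sub_cancel, ← pow_mul, ← pow_add, prod_mul_distrib, prod_pow_eq_pow_sum,
    ← mul_assoc]
  rw [sum_two_mul_prefix_mul_add_eq]

lemma qmul_eq_qbin_mul {a : ℕ} (A : Fin a → ℕ) {t : ℕ} (ht : t ≤ ∑ i, A i) :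
    qmul A = qbin (∑ i, A i) t * (qp t * qp (∑ i, A i - t) / ∏ i, qp (A i)) := by
  have := qp_ne_zero t
  have := qp_ne_zero (∑ i, A i - t)
  rw [qmul, qbin_of_le ht]
  field_simp

lemma prod_qbin_mul_eq_qmul_mul_qmul {a : ℕ} {A At : Fin a → ℕ} (hle : ∀ i, At i ≤ A i) :
    (∏ i, qbin (A i) (At i)) * (qp (∑ i, At i) * qp (∑ i, (A i - At i)) / ∏ i, qp (A i)) =
      qmul At * qmul (fun i => A i - At i) := by
  have hprod (B : Fin a → ℕ) : ∏ i, qp (B i) ≠ 0 := prod_ne_zero_iff.2 fun i _ => qp_ne_zero (B i)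
  have := hprod A
  have := hprod At
  have := hprod fun i => A i - At i
  rw [prod_congr rfl fun i _ => qbin_of_le (hle i), prod_div_distrib, prod_mul_distrib, qmul, qmul]
  field_simp

/-- Splitting of a quantum multinomial coefficient according to a partial sum `t`:
`[|A| choose A] = Σ_{At ≤ A, |At| = t} q^{2 Σ_{i<j} At_j (A_i - At_i)}
  [t choose At] [|A|-t choose A - At]`. -/
theorem quantum_multinomial_splitting {a : ℕ} (A : Fin a → ℕ) (t : ℕ)
    (ht : t ≤ ∑ i, A i) :
    qmul A =
      ∑ At ∈ (Fintype.piFinset fun i => Finset.range (A i + 1)).filter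
          (fun At => ∑ i, At i = t),
        q ^ (2 * ∑ i, ∑ j, if i < j then At j * (A i - At i) else 0) *
          qmul At * qmul (fun i => A i - At i) := by
  rw [qmul_eq_qbin_mul A ht, qbin_sum_eq_sum_prod_qbin, sum_mul]
  refine sum_congr rfl fun At hAt => ?_
  obtain ⟨hmem, rfl⟩ := mem_filter.1 hAt
  have hle := le_of_mem_piFinset_range hmem
  rw [← sum_tsub_distrib _ fun i _ => hle i, mul_assoc, mul_assoc,
    prod_qbin_mul_eq_qmul_mul_qmul hle]
end

section
/- For nonnegative integers d₁,…,d_k and an indeterminate x, the following identity holds in ℚ(q,x): (x²;q²)_{d₁+⋯+d_k} / ((q²;q²)_{d₁}⋯(q²;q²)_{d_k}) equals the sum over all decompositions d_i = α_i + β_i (with α_i, β_i ≥ 0) of (-x²q^{-1})^{α₁+⋯+α_k} · q^{α₁²+⋯+α_k² + 2·Σ_{i=1}^{k-1} α_{i+1}(d₁+⋯+d_i)} / ((q²;q²)_{α₁}⋯(q²;q²)_{α_k}·(q²;q²)_{β₁}⋯(q²;q²)_{β_k}). -/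
open Finset

/-- The field `ℚ(q,x)`, realized as rational functions in `x` over `ℚ(q)`. -/
abbrev K : Type := RatFunc (RatFunc ℚ)

/-- The variable `q` in `ℚ(q,x)`. -/
noncomputable def qv : K := RatFunc.C RatFunc.X

/-- The variable `x` in `ℚ(q,x)`. -/
noncomputable def xv : K := RatFunc.X

/-- `(q²;q²)_k = ∏_{i=1}^{k} (1 - q^{2i})`. -/
noncomputable def qpK (k : ℕ) : K := ∏ i ∈ Finset.range k, (1 - qv ^ (2 * (i + 1)))

/-- `(x²;q²)_n = ∏_{i=0}^{n-1} (1 - x² q^{2i})`. -/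
noncomputable def xpoch (n : ℕ) : K := ∏ i ∈ Finset.range n, (1 - xv ^ 2 * qv ^ (2 * i))

/-! With `Q = q²`, the identity is Cauchy's `q`-binomial theorem
`(a;Q)_n = ∑_j [n choose j]_Q (-a)^j Q^(j choose 2)`, applied to each factor of
`(x²;Q)_{d₁+⋯+d_k} = ∏_i (x² Q^{d₁+⋯+d_{i-1}};Q)_{d_i}`.
Expanding the product of the `k` sums gives the sum over `α`, and
`(-x²q⁻¹)^α q^(α²) = (-x²)^α Q^(α choose 2)` matches the powers of `q`.
Cauchy's theorem itself follows by induction on `n` from `(a;Q)_{n+1} = (1 - a) (aQ;Q)_n` and the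
`q`-Pascal rule defining the Gaussian binomials. -/

section CommRing

variable {R : Type*} [CommRing R]

def qPochhammer (a q : R) (n : ℕ) : R := ∏ i ∈ range n, (1 - a * q ^ i)

@[simp]
lemma qPochhammer_zero (a q : R) : qPochhammer a q 0 = 1 := prod_range_zero _

lemma qPochhammer_succ (a q : R) (n : ℕ) :
    qPochhammer a q (n + 1) = qPochhammer a q n * (1 - a * q ^ n) :=
  prod_range_succ _ _

lemma qPochhammer_succ' (a q : R) (n : ℕ) :
    qPochhammer a q (n + 1) = (1 - a) * qPochhammer (a * q) q n := by
  simp only [qPochhammer, prod_range_succ', pow_succ', pow_zero, mul_one, mul_assoc, mul_comm]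

lemma qPochhammer_add (a q : R) (m n : ℕ) :
    qPochhammer a q (m + n) = qPochhammer a q m * qPochhammer (a * q ^ m) q n := by
  simp only [qPochhammer, prod_range_add, pow_add, mul_assoc]

lemma qPochhammer_sum {k : ℕ} (a q : R) (d : Fin k → ℕ) :
    qPochhammer a q (∑ i, d i) =
      ∏ i, qPochhammer (a * q ^ ∑ j, if j < i then d j else 0) q (d i) := by
  induction k with
  | zero => simp
  | succ k ih =>
    rw [Fin.sum_univ_castSucc, qPochhammer_add, ih, Fin.prod_univ_castSucc]
    simp [Fin.sum_univ_castSucc, Fin.castSucc_lt_castSucc_iff, Fin.castSucc_lt_last,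
      not_lt_of_ge (Fin.castSucc_lt_last _).le]

variable (q : R)

def qBinomial : ℕ → ℕ → R
  | _, 0 => 1
  | 0, _ + 1 => 0
  | n + 1, j + 1 => qBinomial n j + q ^ (j + 1) * qBinomial n (j + 1)

@[simp]
lemma qBinomial_zero_right (n : ℕ) : qBinomial q n 0 = 1 := by
  cases n <;> rfl

lemma qBinomial_succ_succ (n j : ℕ) :
    qBinomial q (n + 1) (j + 1) = qBinomial q n j + q ^ (j + 1) * qBinomial q n (j + 1) := rfl

lemma qBinomial_eq_zero_of_lt : ∀ {n j : ℕ}, n < j → qBinomial q n j = 0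
  | 0, _ + 1, _ => rfl
  | n + 1, j + 1, h => by
    rw [qBinomial_succ_succ, qBinomial_eq_zero_of_lt (by omega),
      qBinomial_eq_zero_of_lt (by omega)]
    ring

lemma qBinomial_mul_qPochhammer : ∀ {n j : ℕ}, j ≤ n →
    qBinomial q n j * qPochhammer q q j * qPochhammer q q (n - j) = qPochhammer q q n
  | n, 0, _ => by simp
  | n + 1, j + 1, h => by
    rcases (Nat.le_of_lt_succ h).eq_or_lt with rfl | hj
    · have h₀ := qBinomial_mul_qPochhammer (le_refl j)
      rw [Nat.sub_self, qPochhammer_zero, mul_one] at h₀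
      rw [qBinomial_succ_succ, qBinomial_eq_zero_of_lt q j.lt_succ_self, Nat.sub_self,
        qPochhammer_zero, qPochhammer_succ]
      linear_combination (1 - q * q ^ j) * h₀
    · obtain ⟨m, rfl⟩ : ∃ m, n = j + m + 1 := ⟨n - j - 1, by omega⟩
      have h₁ := qBinomial_mul_qPochhammer (n := j + m + 1) (j := j) (by omega)
      have h₂ := qBinomial_mul_qPochhammer (n := j + m + 1) (j := j + 1) (by omega)
      rw [show j + m + 1 - j = m + 1 by omega] at h₁
      rw [show j + m + 1 - (j + 1) = m by omega] at h₂
      rw [show j + m + 1 + 1 - (j + 1) = m + 1 by omega, qBinomial_succ_succ]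
      simp only [qPochhammer_succ] at h₁ h₂ ⊢
      linear_combination (1 - q * q ^ j) * h₁ + q ^ (j + 1) * (1 - q * q ^ m) * h₂

theorem qPochhammer_eq_sum_qBinomial (a : R) (n : ℕ) :
    qPochhammer a q n = ∑ j ∈ range (n + 1), qBinomial q n j * (-a) ^ j * q ^ j.choose 2 := by
  induction n generalizing a with
  | zero => simp
  | succ n ih =>
    have h_choose (j : ℕ) : (j + 1).choose 2 = j + j.choose 2 := by
      rw [Nat.choose_succ_succ', Nat.choose_one_right]
    have h_low : ∑ j ∈ range (n + 1), qBinomial q n j * (-a) ^ (j + 1) * q ^ (j + 1).choose 2 =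
        -a * qPochhammer (a * q) q n := by
      rw [ih, mul_sum]
      refine sum_congr rfl fun j _ => ?_
      rw [h_choose]
      ring
    have h_high : ∑ j ∈ range (n + 1),
          q ^ (j + 1) * qBinomial q n (j + 1) * (-a) ^ (j + 1) * q ^ (j + 1).choose 2 + 1 =
        qPochhammer (a * q) q n := by
      rw [ih, sum_range_succ _ n, qBinomial_eq_zero_of_lt q n.lt_succ_self, sum_range_succ']
      simp only [mul_zero, zero_mul, add_zero, qBinomial_zero_right, pow_zero, Nat.choose_zero_succ,
        mul_one]
      refine congrArg (· + 1) (sum_congr rfl fun j _ => ?_)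
      ring
    rw [qPochhammer_succ', sum_range_succ']
    simp only [qBinomial_succ_succ, add_mul, sum_add_distrib, qBinomial_zero_right, pow_zero,
      Nat.choose_zero_succ, mul_one]
    linear_combination -h_low - h_high

end CommRing

section Field

variable {F : Type*} [Field F] {q : F}

lemma qPochhammer_div_eq_sum {n : ℕ} (hq : qPochhammer q q n ≠ 0) (a : F) :
    qPochhammer a q n / qPochhammer q q n =
      ∑ j ∈ range (n + 1),
        (-a) ^ j * q ^ j.choose 2 / (qPochhammer q q j * qPochhammer q q (n - j)) := by
  rw [qPochhammer_eq_sum_qBinomial q, sum_div]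
  refine sum_congr rfl fun j hj => ?_
  rw [← qBinomial_mul_qPochhammer q (Nat.lt_succ_iff.mp (mem_range.mp hj))] at hq ⊢
  simp only [ne_eq, mul_eq_zero, not_or] at hq
  obtain ⟨⟨h_binom, h_left⟩, h_right⟩ := hq
  field_simp

lemma qPochhammer_sum_div_eq_sum_piFinset {k : ℕ} (d : Fin k → ℕ)
    (hq : ∀ i, qPochhammer q q (d i) ≠ 0) (a : F) :
    qPochhammer a q (∑ i, d i) / ∏ i, qPochhammer q q (d i) =
      ∑ α ∈ Fintype.piFinset fun i => range (d i + 1),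
        (-a) ^ (∑ i, α i) *
          q ^ (∑ i, (α i).choose 2 + ∑ i, ∑ j, if j < i then α i * d j else 0) /
          ((∏ i, qPochhammer q q (α i)) * ∏ i, qPochhammer q q (d i - α i)) := by
  rw [qPochhammer_sum, ← prod_div_distrib]
  simp_rw [qPochhammer_div_eq_sum (hq _)]
  rw [prod_univ_sum]
  refine sum_congr rfl fun α _ => ?_
  rw [prod_div_distrib, prod_mul_distrib (f := fun i => qPochhammer q q (α i))]
  congr 1
  simp only [← neg_mul, mul_pow, ← pow_mul, prod_mul_distrib, prod_pow_eq_pow_sum]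
  rw [mul_assoc, ← pow_add, add_comm]
  simp only [sum_mul, ite_mul, zero_mul, mul_comm (d _)]

end Field

lemma Nat.sq_eq_add_two_mul_choose_two : ∀ n : ℕ, n ^ 2 = n + 2 * n.choose 2
  | 0 => rfl
  | n + 1 => by
    rw [Nat.choose_succ_succ', Nat.choose_one_right]
    linarith [Nat.sq_eq_add_two_mul_choose_two n]

lemma qv_pow_ne_one {m : ℕ} (hm : 0 < m) : qv ^ m ≠ 1 := by
  rw [qv, ← map_pow, ← map_one RatFunc.C, RatFunc.C_injective.ne_iff, ← RatFunc.algebraMap_X,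
    ← map_pow, ← map_one (algebraMap (Polynomial ℚ) (RatFunc ℚ)),
    (RatFunc.algebraMap_injective ℚ).ne_iff]
  intro h
  simpa [hm.ne'] using congrArg Polynomial.natDegree h

lemma qpK_eq_qPochhammer (n : ℕ) : qpK n = qPochhammer (qv ^ 2) (qv ^ 2) n := by
  simp only [qpK, qPochhammer, ← pow_mul, ← pow_add, mul_add, mul_one, add_comm]

lemma xpoch_eq_qPochhammer (n : ℕ) : xpoch n = qPochhammer (xv ^ 2) (qv ^ 2) n := by
  simp only [xpoch, qPochhammer, ← pow_mul]

lemma qpK_ne_zero (n : ℕ) : qpK n ≠ 0 :=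
  prod_ne_zero_iff.mpr fun _ _ => sub_ne_zero.mpr (qv_pow_ne_one (by omega)).symm

/-- KRSS Lemma 4.5: splitting of a q-Pochhammer factor into quiver-form summations:
`(x²;q²)_{|d|} / ∏ (q²;q²)_{d_i}` equals the sum over decompositions `d_i = α_i + β_i` of
`(-x²q^{-1})^{|α|} q^{Σ α_i² + 2 Σ_{i=1}^{k-1} α_{i+1}(d₁+⋯+d_i)} / (∏ (q²;q²)_{α_i} (q²;q²)_{β_i})`. -/
theorem pochhammer_splitting {k : ℕ} (d : Fin k → ℕ) :
    xpoch (∑ i, d i) / ∏ i, qpK (d i) =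
      ∑ α ∈ Fintype.piFinset fun i => Finset.range (d i + 1),
        (-(xv ^ 2) * qv⁻¹) ^ (∑ i, α i) *
          qv ^ (∑ i, (α i) ^ 2 + 2 * ∑ i, ∑ j, if j < i then α i * d j else 0) /
          ((∏ i, qpK (α i)) * ∏ i, qpK (d i - α i)) := by
  have hq (n : ℕ) : qPochhammer (qv ^ 2) (qv ^ 2) n ≠ 0 :=
    qpK_eq_qPochhammer n ▸ qpK_ne_zero n
  simp only [xpoch_eq_qPochhammer, qpK_eq_qPochhammer]
  rw [qPochhammer_sum_div_eq_sum_piFinset d (fun i => hq _)]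
  refine sum_congr rfl fun α _ => ?_
  congr 1
  set E := ∑ i, ∑ j, if j < i then α i * d j else 0
  have hexp : ∑ i, α i ^ 2 + 2 * E = ∑ i, α i + 2 * (∑ i, (α i).choose 2 + E) := by
    simp only [Nat.sq_eq_add_two_mul_choose_two, sum_add_distrib, ← mul_sum]
    ring
  have hqv : qv ≠ 0 := by simp [qv, RatFunc.X_ne_zero]
  rw [hexp, pow_add qv, pow_mul qv 2, mul_pow, inv_pow, mul_assoc,
    inv_mul_cancel_left₀ (pow_ne_zero _ hqv)]
end
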